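/- Assume k ≥ 2. Let W ⊆ M'_V ∪ M'_E with |W| ≤ k + k(k−1)/2, write X_V = {v ∈ V : m'_v ∈ W} and X_E = {e ∈ E : m'_e ∈ W}, and let M̂ be a stable matching in I_W covering w* that contains no problematic pair. Then {m*,w*} ∈ M̂; every selector woman in S is matched by M̂ to a man of the form m_e; the set Ê = {e ∈ E : M̂(m_e) ∈ S} has exactly k(k−1)/2 elements; Ê ⊆ X_E; every endpoint of every edge of Ê lies in X_V; and consequently the edges of Ê span exactly k vertices which form a clique of size k in G. -/

import Mathlib

/-- A Stable Roommates instance on agent type `α`: a symmetric, loopless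
acceptability relation, together with, for each agent `u`, a strict linear
order `pref u` over the agents acceptable to `u`
(`pref u x y` means `u` strictly prefers `x` to `y`). -/
structure SR (α : Type*) where
  accept : α → α → Prop
  symm : ∀ {u v}, accept u v → accept v u
  loopless : ∀ u, ¬ accept u u
  pref : α → α → α → Prop
  pref_acc : ∀ {u x y}, pref u x y → accept u x ∧ accept u y
  pref_irrefl : ∀ u x, ¬ pref u x x
  pref_trans : ∀ {u x y z}, pref u x y → pref u y z → pref u x z
  pref_total : ∀ {u x y}, accept u x → accept u y → x ≠ y → pref u x y ∨ pref u y x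

namespace SR

variable {α : Type*}

/-- `M` is a matching in `I`: a set of acceptable pairs in which
every agent has at most one partner. -/
def IsMatching (I : SR α) (M : Finset (Sym2 α)) : Prop :=
  (∀ u v : α, s(u, v) ∈ M → I.accept u v) ∧
  (∀ u v w : α, s(u, v) ∈ M → s(u, w) ∈ M → v = w)

/-- The pair `{u, v}` blocks the matching `M` in `I`. -/
def Blocks (I : SR α) (M : Finset (Sym2 α)) (u v : α) : Prop :=
  I.accept u v ∧ (∀ w, s(u, w) ∈ M → I.pref u v w) ∧ (∀ w, s(v, w) ∈ M → I.pref v u w)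

/-- `M` is a stable matching in `I`. -/
def IsStable (I : SR α) (M : Finset (Sym2 α)) : Prop :=
  I.IsMatching M ∧ ∀ u v, ¬ I.Blocks M u v

/-- The instance obtained from `I` by deleting the acceptability of the pairs in `F`. -/
def delPairs (I : SR α) (F : Set (Sym2 α)) : SR α where
  accept u v := I.accept u v ∧ s(u, v) ∉ F
  symm h := ⟨I.symm h.1, by rw [Sym2.eq_swap]; exact h.2⟩
  loopless u h := I.loopless u h.1
  pref u x y := I.pref u x y ∧ s(u, x) ∉ F ∧ s(u, y) ∉ F
  pref_acc h := ⟨⟨(I.pref_acc h.1).1, h.2.1⟩, ⟨(I.pref_acc h.1).2, h.2.2⟩⟩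
  pref_irrefl u x h := I.pref_irrefl u x h.1
  pref_trans h1 h2 := ⟨I.pref_trans h1.1 h2.1, h1.2.1, h2.2.2⟩
  pref_total hx hy hne :=
    (I.pref_total hx.1 hy.1 hne).imp (fun h => ⟨h, hx.2, hy.2⟩) (fun h => ⟨h, hy.2, hx.2⟩)

/-- The sub-instance of `I` induced by the agent set `T`. -/
def induce (I : SR α) (T : Set α) : SR α where
  accept u v := I.accept u v ∧ u ∈ T ∧ v ∈ T
  symm h := ⟨I.symm h.1, h.2.2, h.2.1⟩
  loopless u h := I.loopless u h.1
  pref u x y := I.pref u x y ∧ u ∈ T ∧ x ∈ T ∧ y ∈ T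
  pref_acc h := ⟨⟨(I.pref_acc h.1).1, h.2.1, h.2.2.1⟩, ⟨(I.pref_acc h.1).2, h.2.1, h.2.2.2⟩⟩
  pref_irrefl u x h := I.pref_irrefl u x h.1
  pref_trans h1 h2 := ⟨I.pref_trans h1.1 h2.1, h1.2.1, h1.2.2.1, h2.2.2.2⟩
  pref_total hx hy hne :=
    (I.pref_total hx.1 hy.1 hne).imp (fun h => ⟨h, hx.2.1, hx.2.2, hy.2.2⟩)
      (fun h => ⟨h, hx.2.1, hy.2.2, hx.2.2⟩)

/-- The instance obtained from `I` by deleting the agents in `W`. -/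
def delAgents (I : SR α) (W : Set α) : SR α := I.induce Wᶜ

end SR

/-! ## The clique construction `I(G, k)` -/

/-- Agents of the instance `I(G, k)`: women `w_v`, `w_e`, selector women `s_i`, `w*`;
men `m'_v`, `m_e`, `m'_e`, dummy men `d_i`, and `m*`.  (Agents whose index is out of
range — `we e` or `me e` or `me' e` with `e` not an edge, `sel i` with
`i ≥ k(k-1)/2`, `dum i` with `i ≥ |V| - k` — are inactive: they accept nobody.) -/
inductive CAg (V : Type*) where
  | wv : V → CAg V          -- woman `w_v`
  | we : Sym2 V → CAg V     -- woman `w_e`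
  | sel : ℕ → CAg V         -- selector woman `s_i`
  | wstar : CAg V           -- woman `w*`
  | mv : V → CAg V          -- man `m'_v`
  | me : Sym2 V → CAg V     -- man `m_e`
  | me' : Sym2 V → CAg V    -- man `m'_e`
  | dum : ℕ → CAg V         -- dummy man `d_i`
  | mstar : CAg V           -- man `m*`
  deriving DecidableEq

open CAg

/-- The acceptability lists of `I(G, k)` (from the men's side, plus `m*`'s list);
`q = k(k-1)/2` is the number of selector women and `d = |V| - k` the number of dummies. -/
def cliqueBaseAcc {V : Type*} (G : SimpleGraph V) (q d : ℕ) (x y : CAg V) : Prop :=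
  (x = mstar ∧ ((∃ i < q, y = sel i) ∨ y = wstar)) ∨
  (∃ i < q, x = sel i ∧ ∃ e ∈ G.edgeSet, y = me e) ∨
  (∃ e ∈ G.edgeSet, x = me e ∧ (y = we e ∨ ∃ v ∈ e, y = wv v)) ∨
  (∃ e ∈ G.edgeSet, x = me' e ∧ y = we e) ∨
  (∃ v : V, x = mv v ∧ y = wv v) ∨
  (∃ i < d, x = dum i ∧ ∃ v : V, y = wv v)

/-- `I` is a realization of the instance `I(G, k)`: its acceptability relation is as
prescribed, and its preferences respect all comparisons forced by the construction
(within each unordered set in a preference list the order is arbitrary). -/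
def IsCliqueInstance {V : Type*} [Fintype V] (G : SimpleGraph V) (k : ℕ)
    (I : SR (CAg V)) : Prop :=
  (∀ x y, I.accept x y ↔
    (cliqueBaseAcc G (k * (k - 1) / 2) (Fintype.card V - k) x y ∨
     cliqueBaseAcc G (k * (k - 1) / 2) (Fintype.card V - k) y x)) ∧
  -- m*: S ≻ w*
  (∀ i < k * (k - 1) / 2, I.pref mstar (sel i) wstar) ∧
  -- s: {m_e : e ∈ E} ≻ m*
  (∀ i < k * (k - 1) / 2, ∀ e ∈ G.edgeSet, I.pref (sel i) (me e) mstar) ∧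
  -- m_e: w_e ≻ {w_v : v ∈ e} ≻ S
  (∀ e ∈ G.edgeSet, ∀ v ∈ e, I.pref (me e) (we e) (wv v)) ∧
  (∀ e ∈ G.edgeSet, ∀ v ∈ e, ∀ i < k * (k - 1) / 2, I.pref (me e) (wv v) (sel i)) ∧
  (∀ e ∈ G.edgeSet, ∀ i < k * (k - 1) / 2, I.pref (me e) (we e) (sel i)) ∧
  -- w_e: m'_e ≻ m_e
  (∀ e ∈ G.edgeSet, I.pref (we e) (me' e) (me e)) ∧
  -- w_v: m'_v ≻ {m_e : e ∋ v} ≻ D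
  (∀ v : V, ∀ e ∈ G.edgeSet, v ∈ e → I.pref (wv v) (mv v) (me e)) ∧
  (∀ v : V, ∀ e ∈ G.edgeSet, v ∈ e → ∀ i < Fintype.card V - k, I.pref (wv v) (me e) (dum i)) ∧
  (∀ v : V, ∀ i < Fintype.card V - k, I.pref (wv v) (mv v) (dum i))

/-- The original agents of `I(G, k)`: everybody except the addable men `m'_v`, `m'_e`. -/
def cliqueOrig {V : Type*} [Fintype V] (G : SimpleGraph V) (k : ℕ) : Set (CAg V) :=
  {x | (∃ v : V, x = wv v) ∨ (∃ e ∈ G.edgeSet, x = we e) ∨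
    (∃ i < k * (k - 1) / 2, x = sel i) ∨ x = wstar ∨
    (∃ e ∈ G.edgeSet, x = me e) ∨ (∃ i < Fintype.card V - k, x = dum i) ∨ x = mstar}

/-- The addable men `M'_V = {m'_v : v ∈ V}`. -/
def addableMV {V : Type*} : Set (CAg V) := {x | ∃ v : V, x = mv v}

/-- The addable men `M'_E = {m'_e : e ∈ E}`. -/
def addableME {V : Type*} (G : SimpleGraph V) : Set (CAg V) :=
  {x | ∃ e ∈ G.edgeSet, x = me' e}

/-- A pair `{m_e, w_v}` with `v` an endpoint of the edge `e` is *problematic*. -/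
def Problematic {V : Type*} (G : SimpleGraph V) (p : Sym2 (CAg V)) : Prop :=
  ∃ e ∈ G.edgeSet, ∃ v ∈ e, p = s(me e, wv v)

/-! `w*` accepts only `m*`, so `{m*, w*} ∈ M̂`; a selector woman left without some `m_e` would
then block with `m*`, who prefers her to `w*`. Hence `Ê` is in bijection with `S`. For `e ∈ Ê` the
man `m_e` prefers `w_e` and every `w_v`, `v ∈ e`, to his selector partner, so stability forces
`w_e` onto `m'_e` and (problematic pairs being excluded) `w_v` onto `m'_v`; all these men lie in
`W`. The budget `|W| ≤ k + k(k-1)/2` leaves at most `k` vertices spanned by the `k(k-1)/2` edges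
of `Ê`, which is only possible if they are exactly `k` vertices, pairwise joined by `Ê`. -/

theorem Nat.choose_two_lt_choose_two {m n : ℕ} (hmn : m < n) (hn : 2 ≤ n) :
    m.choose 2 < n.choose 2 := by
  obtain ⟨n, rfl⟩ : ∃ n', n = n' + 1 := ⟨n - 1, by omega⟩
  calc m.choose 2 ≤ n.choose 2 := Nat.choose_le_choose 2 (by omega)
    _ < n.choose 1 + n.choose 2 := by rw [Nat.choose_one_right]; omega
    _ = (n + 1).choose 2 := (Nat.choose_succ_succ' n 1).symm

theorem Set.ncard_add_ncard_le_of_image_subset {α β γ : Type*} {f : α → γ} {g : β → γ}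
    (hf : f.Injective) (hg : g.Injective) (hfg : ∀ a b, f a ≠ g b) {A : Set α} {B : Set β}
    {C : Set γ} (hC : C.Finite) (hA : f '' A ⊆ C) (hB : g '' B ⊆ C) :
    A.ncard + B.ncard ≤ C.ncard := by
  have hdisj : Disjoint (f '' A) (g '' B) :=
    Set.disjoint_left.2 fun _ ⟨a, _, ha⟩ ⟨b, _, hb⟩ => hfg a b (ha.trans hb.symm)
  calc A.ncard + B.ncard = (f '' A ∪ g '' B).ncard := by
        rw [Set.ncard_union_eq hdisj (hC.subset hA) (hC.subset hB),
          Set.ncard_image_of_injective _ hf, Set.ncard_image_of_injective _ hg]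
    _ ≤ C.ncard := Set.ncard_le_ncard (Set.union_subset hA hB) hC

section Sym2

variable {V : Type*}

theorem Sym2.ncard_image_map_val_diagSet_compl (S : Set V) :
    (Sym2.map ((↑) : S → V) '' Sym2.diagSetᶜ).ncard = S.ncard.choose 2 := by
  rw [Set.ncard_image_of_injective _ (Sym2.map.injective Subtype.val_injective),
    Sym2.ncard_diagSet_compl, Nat.card_coe_set_eq]

theorem Sym2.subset_image_map_val_diagSet_compl {E : Set (Sym2 V)}
    (hE : ∀ e ∈ E, ¬ e.IsDiag) :
    E ⊆ Sym2.map ((↑) : {v | ∃ e ∈ E, v ∈ e} → V) '' Sym2.diagSetᶜ := by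
  intro e he
  induction e using Sym2.ind with
  | _ u v =>
    refine ⟨s(⟨u, _, he, Sym2.mem_mk_left u v⟩, ⟨v, _, he, Sym2.mem_mk_right u v⟩), ?_, rfl⟩
    simpa using hE _ he

end Sym2

theorem SimpleGraph.ncard_eq_and_isClique_of_choose_two_le {V : Type*} [Finite V]
    {G : SimpleGraph V} {E : Set (Sym2 V)} {k : ℕ} (hEG : E ⊆ G.edgeSet) (hk : 2 ≤ k)
    (hS : {v | ∃ e ∈ E, v ∈ e}.ncard ≤ k) (hE : k.choose 2 ≤ E.ncard) :
    {v | ∃ e ∈ E, v ∈ e}.ncard = k ∧ G.IsClique {v | ∃ e ∈ E, v ∈ e} := by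
  set S := {v | ∃ e ∈ E, v ∈ e}
  have hsub := Sym2.subset_image_map_val_diagSet_compl fun e he =>
    G.not_isDiag_of_mem_edgeSet (hEG he)
  have hP := Sym2.ncard_image_map_val_diagSet_compl S
  have hSk : S.ncard = k := by
    refine le_antisymm hS (not_lt.1 fun hlt => ?_)
    have := (Set.ncard_le_ncard hsub).trans_eq hP
    exact (Nat.choose_two_lt_choose_two hlt hk).not_ge (hE.trans this)
  have hEP := Set.eq_of_subset_of_ncard_le hsub (by rw [hP, hSk]; exact hE)
  refine ⟨hSk, fun u hu v hv huv => G.mem_edgeSet.1 (hEG ?_)⟩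
  rw [hEP]
  exact ⟨s(⟨u, hu⟩, ⟨v, hv⟩), by simpa using huv, rfl⟩

namespace SR

variable {α : Type*} {I : SR α} {M : Finset (Sym2 α)}

theorem IsMatching.eq_of_mem (hM : I.IsMatching M) {u v w : α} (hv : s(u, v) ∈ M)
    (hw : s(u, w) ∈ M) : v = w :=
  hM.2 u v w hv hw

theorem IsMatching.ncard_eq_of_matched {β γ : Type*} {f : β → α} {g : γ → α}
    (hf : f.Injective) (hg : g.Injective) (hM : I.IsMatching M) {A : Set β} {B : Set γ}
    (hA : ∀ a ∈ A, ∃ b ∈ B, s(f a, g b) ∈ M) (hB : ∀ b ∈ B, ∃ a ∈ A, s(f a, g b) ∈ M) :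
    A.ncard = B.ncard := by
  choose p hpB hpM using hA
  refine Set.ncard_congr p hpB (fun a a' ha ha' h => hf ?_) fun b hb => ?_
  · refine hM.eq_of_mem (u := g (p a ha)) ?_ ?_
    · rw [Sym2.eq_swap]; exact hpM a ha
    · rw [Sym2.eq_swap, h]; exact hpM a' ha'
  · obtain ⟨a, ha, hab⟩ := hB b hb
    exact ⟨a, ha, hg (hM.eq_of_mem (hpM a ha) hab)⟩

theorem IsStable.not_blocks_of_induce {T : Set α} (hM : (I.induce T).IsStable M) {u v : α}
    (hu : u ∈ T) (hv : v ∈ T) : ¬ I.Blocks M u v := fun h =>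
  hM.2 u v ⟨⟨h.1, hu, hv⟩, fun w hw => ⟨h.2.1 w hw, hu, hv, (hM.1.1 u w hw).2.2⟩,
    fun w hw => ⟨h.2.2 w hw, hv, hu, (hM.1.1 v w hw).2.2⟩⟩

end SR

section CliqueInstance

variable {V : Type*} [Fintype V] {G : SimpleGraph V} {k : ℕ}

theorem mstar_mem_cliqueOrig : (mstar : CAg V) ∈ cliqueOrig G k := by simp [cliqueOrig]

theorem sel_mem_cliqueOrig {i : ℕ} (hi : i < k * (k - 1) / 2) :
    (sel i : CAg V) ∈ cliqueOrig G k := by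
  simp [cliqueOrig, hi]

theorem wv_mem_cliqueOrig (v : V) : wv v ∈ cliqueOrig G k := by simp [cliqueOrig]

theorem we_mem_cliqueOrig {e : Sym2 V} (he : e ∈ G.edgeSet) : we e ∈ cliqueOrig G k := by
  simp [cliqueOrig, he]

theorem me_mem_cliqueOrig {e : Sym2 V} (he : e ∈ G.edgeSet) : me e ∈ cliqueOrig G k := by
  simp [cliqueOrig, he]

theorem mv_notMem_cliqueOrig (v : V) : mv v ∉ cliqueOrig G k := by simp [cliqueOrig]

theorem me'_notMem_cliqueOrig (e : Sym2 V) : me' e ∉ cliqueOrig G k := by simp [cliqueOrig]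

theorem finite_of_subset_addable {W : Set (CAg V)} (hW : W ⊆ addableMV ∪ addableME G) :
    W.Finite := by
  refine ((Set.finite_range mv).union (Set.finite_range me')).subset fun x hx => ?_
  rcases hW hx with ⟨v, rfl⟩ | ⟨e, -, rfl⟩
  exacts [Or.inl ⟨v, rfl⟩, Or.inr ⟨e, rfl⟩]

namespace IsCliqueInstance

variable {I : SR (CAg V)}

theorem eq_mstar_of_accept_wstar (hI : IsCliqueInstance G k I) {y : CAg V}
    (h : I.accept wstar y) : y = mstar := by
  simpa [hI.1, cliqueBaseAcc] using h

theorem accept_sel (hI : IsCliqueInstance G k I) {i : ℕ} {y : CAg V}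
    (h : I.accept (sel i) y) : (∃ e ∈ G.edgeSet, y = me e) ∨ y = mstar := by
  rw [hI.1] at h
  aesop (add norm simp cliqueBaseAcc)

theorem accept_we (hI : IsCliqueInstance G k I) {e : Sym2 V} {y : CAg V}
    (h : I.accept (we e) y) : y = me e ∨ y = me' e := by
  rw [hI.1] at h
  aesop (add norm simp cliqueBaseAcc)

theorem accept_wv (hI : IsCliqueInstance G k I) {v : V} {y : CAg V} (h : I.accept (wv v) y) :
    (∃ e ∈ G.edgeSet, y = me e ∧ v ∈ e) ∨ y = mv v ∨ ∃ j < Fintype.card V - k, y = dum j := by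
  simpa [hI.1, cliqueBaseAcc] using h

theorem accept_mstar_sel (hI : IsCliqueInstance G k I) {i : ℕ}
    (hi : i < k * (k - 1) / 2) : I.accept mstar (sel i) := by
  simp [hI.1, cliqueBaseAcc, hi]

theorem accept_me_we (hI : IsCliqueInstance G k I) {e : Sym2 V} (he : e ∈ G.edgeSet) :
    I.accept (me e) (we e) := by
  simp [hI.1, cliqueBaseAcc, he]

theorem accept_me_wv (hI : IsCliqueInstance G k I) {e : Sym2 V} (he : e ∈ G.edgeSet) {v : V}
    (hv : v ∈ e) : I.accept (me e) (wv v) := by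
  simp [hI.1, cliqueBaseAcc, he, hv]

theorem pref_mstar_sel_wstar (hI : IsCliqueInstance G k I) {i : ℕ}
    (hi : i < k * (k - 1) / 2) : I.pref mstar (sel i) wstar :=
  hI.2.1 i hi

theorem pref_me_wv_sel (hI : IsCliqueInstance G k I) {e : Sym2 V} (he : e ∈ G.edgeSet) {v : V}
    (hv : v ∈ e) {i : ℕ} (hi : i < k * (k - 1) / 2) : I.pref (me e) (wv v) (sel i) :=
  hI.2.2.2.2.1 e he v hv i hi

theorem pref_me_we_sel (hI : IsCliqueInstance G k I) {e : Sym2 V} (he : e ∈ G.edgeSet) {i : ℕ}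
    (hi : i < k * (k - 1) / 2) : I.pref (me e) (we e) (sel i) :=
  hI.2.2.2.2.2.1 e he i hi

theorem pref_wv_me_dum (hI : IsCliqueInstance G k I) {e : Sym2 V} (he : e ∈ G.edgeSet) {v : V}
    (hv : v ∈ e) {j : ℕ} (hj : j < Fintype.card V - k) : I.pref (wv v) (me e) (dum j) :=
  hI.2.2.2.2.2.2.2.2.1 v e he hv j hj

variable {W : Set (CAg V)} {M : Finset (Sym2 (CAg V))}

theorem mstar_wstar_mem (hI : IsCliqueInstance G k I)
    (hM : (I.induce (cliqueOrig G k ∪ W)).IsStable M) (hcov : ∃ y, s(wstar, y) ∈ M) :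
    s(mstar, wstar) ∈ M := by
  obtain ⟨y, hy⟩ := hcov
  rwa [← hI.eq_mstar_of_accept_wstar (hM.1.1 _ _ hy).1, Sym2.eq_swap]

theorem exists_sel_me_mem (hI : IsCliqueInstance G k I)
    (hM : (I.induce (cliqueOrig G k ∪ W)).IsStable M) (hstar : s(mstar, wstar) ∈ M) {i : ℕ}
    (hi : i < k * (k - 1) / 2) : ∃ e ∈ G.edgeSet, s(sel i, me e) ∈ M := by
  by_contra! hno
  refine hM.not_blocks_of_induce (.inl mstar_mem_cliqueOrig) (.inl (sel_mem_cliqueOrig hi))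
    ⟨hI.accept_mstar_sel hi, fun w hw => ?_, fun w hw => ?_⟩
  · rw [hM.1.eq_of_mem hw hstar]
    exact hI.pref_mstar_sel_wstar hi
  · exfalso
    rcases hI.accept_sel (hM.1.1 _ _ hw).1 with ⟨e, he, rfl⟩ | rfl
    · exact hno e he hw
    · cases hM.1.eq_of_mem (by rwa [Sym2.eq_swap] at hw) hstar

theorem me'_mem_of_me_sel_mem (hI : IsCliqueInstance G k I)
    (hM : (I.induce (cliqueOrig G k ∪ W)).IsStable M) {e : Sym2 V} (he : e ∈ G.edgeSet) {i : ℕ}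
    (hi : i < k * (k - 1) / 2) (hsel : s(me e, sel i) ∈ M) : me' e ∈ W := by
  suffices hpart : s(we e, me' e) ∈ M from
    (hM.1.1 _ _ hpart).2.2.resolve_left (me'_notMem_cliqueOrig e)
  by_contra hno
  refine hM.not_blocks_of_induce (.inl (me_mem_cliqueOrig he)) (.inl (we_mem_cliqueOrig he))
    ⟨hI.accept_me_we he, fun w hw => ?_, fun w hw => ?_⟩
  · rw [hM.1.eq_of_mem hw hsel]
    exact hI.pref_me_we_sel he hi
  · exfalso
    rcases hI.accept_we (hM.1.1 _ _ hw).1 with rfl | rfl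
    · cases hM.1.eq_of_mem (by rwa [Sym2.eq_swap] at hw) hsel
    · exact hno hw

theorem mv_mem_of_me_sel_mem (hI : IsCliqueInstance G k I)
    (hM : (I.induce (cliqueOrig G k ∪ W)).IsStable M) (hnoprob : ∀ p ∈ M, ¬ Problematic G p)
    {e : Sym2 V} (he : e ∈ G.edgeSet) {v : V} (hv : v ∈ e) {i : ℕ}
    (hi : i < k * (k - 1) / 2) (hsel : s(me e, sel i) ∈ M) : mv v ∈ W := by
  suffices hpart : s(wv v, mv v) ∈ M from
    (hM.1.1 _ _ hpart).2.2.resolve_left (mv_notMem_cliqueOrig v)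
  by_contra hno
  refine hM.not_blocks_of_induce (.inl (me_mem_cliqueOrig he)) (.inl (wv_mem_cliqueOrig v))
    ⟨hI.accept_me_wv he hv, fun w hw => ?_, fun w hw => ?_⟩
  · rw [hM.1.eq_of_mem hw hsel]
    exact hI.pref_me_wv_sel he hv hi
  · rcases hI.accept_wv (hM.1.1 _ _ hw).1 with ⟨e', he', rfl, hv'⟩ | rfl | ⟨j, hj, rfl⟩
    · exact (hnoprob _ (by rwa [Sym2.eq_swap] at hw) ⟨e', he', v, hv', rfl⟩).elim
    · exact (hno hw).elim
    · exact hI.pref_wv_me_dum he hv hj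

end IsCliqueInstance

end CliqueInstance

theorem csm_addAg_clique_structure_general {V : Type*} [Fintype V]
    (G : SimpleGraph V) (k : ℕ) (hk : 2 ≤ k)
    (I : SR (CAg V)) (hI : IsCliqueInstance G k I)
    (W : Set (CAg V)) (hW : W ⊆ addableMV ∪ addableME G)
    (hWcard : W.ncard ≤ k + k * (k - 1) / 2)
    (M : Finset (Sym2 (CAg V)))
    (hM : (I.induce (cliqueOrig G k ∪ W)).IsStable M)
    (hcov : ∃ y, s(CAg.wstar, y) ∈ M)
    (hnoprob : ∀ p ∈ M, ¬ Problematic G p) :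
    s(CAg.mstar, CAg.wstar) ∈ M ∧
    (∀ i < k * (k - 1) / 2, ∃ e ∈ G.edgeSet, s(CAg.sel i, CAg.me e) ∈ M) ∧
    ∀ XV : Set V, XV = {v : V | CAg.mv v ∈ W} →
    ∀ XE : Set (Sym2 V), XE = {e : Sym2 V | e ∈ G.edgeSet ∧ CAg.me' e ∈ W} →
    ∀ Ehat : Set (Sym2 V),
      Ehat = {e : Sym2 V | e ∈ G.edgeSet ∧ ∃ i < k * (k - 1) / 2, s(CAg.me e, CAg.sel i) ∈ M} →
      Ehat.ncard = k * (k - 1) / 2 ∧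
      Ehat ⊆ XE ∧
      (∀ e ∈ Ehat, ∀ v ∈ e, v ∈ XV) ∧
      {v : V | ∃ e ∈ Ehat, v ∈ e}.ncard = k ∧
      G.IsClique {v : V | ∃ e ∈ Ehat, v ∈ e} := by
  have hstar := hI.mstar_wstar_mem hM hcov
  have hsel i (hi : i < k * (k - 1) / 2) := hI.exists_sel_me_mem hM hstar hi
  refine ⟨hstar, hsel, ?_⟩
  rintro XV rfl XE rfl _ rfl
  set Ehat := {e : Sym2 V | e ∈ G.edgeSet ∧ ∃ i < k * (k - 1) / 2, s(me e, sel i) ∈ M}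
  have hcard : Ehat.ncard = k * (k - 1) / 2 := by
    rw [← Set.ncard_Iio_nat (k * (k - 1) / 2)]
    refine hM.1.ncard_eq_of_matched (fun _ _ h => me.inj h) (fun _ _ h => sel.inj h)
      (fun e ⟨_, i, hi, h⟩ => ⟨i, hi, h⟩) fun i hi => ?_
    obtain ⟨e, he, h⟩ := hsel i hi
    rw [Sym2.eq_swap] at h
    exact ⟨e, ⟨he, i, hi, h⟩, h⟩
  have hXE : ∀ e ∈ Ehat, me' e ∈ W := fun e ⟨he, _, hi, h⟩ =>
    hI.me'_mem_of_me_sel_mem hM he hi h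
  have hXV : ∀ e ∈ Ehat, ∀ v ∈ e, mv v ∈ W := fun e ⟨he, _, hi, h⟩ v hv =>
    hI.mv_mem_of_me_sel_mem hM hnoprob he hv hi h
  have hspan : {v : V | ∃ e ∈ Ehat, v ∈ e}.ncard ≤ k := by
    have : Ehat.ncard + {v : V | ∃ e ∈ Ehat, v ∈ e}.ncard ≤ W.ncard :=
      Set.ncard_add_ncard_le_of_image_subset (fun _ _ h => me'.inj h) (fun _ _ h => mv.inj h)
        (fun _ _ => nofun) (finite_of_subset_addable hW) (Set.image_subset_iff.2 hXE)
        (Set.image_subset_iff.2 fun v ⟨e, he, hv⟩ => hXV e he v hv)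
    omega
  obtain ⟨hspan_card, hclique⟩ :=
    G.ncard_eq_and_isClique_of_choose_two_le (fun e he => he.1) hk hspan
      (by rw [hcard, Nat.choose_two_right])
  exact ⟨hcard, fun e he => ⟨he.1, hXE e he⟩, hXV, hspan_card, hclique⟩

/-- Assume `k ≥ 2`. Let `W ⊆ M'_V ∪ M'_E` with `|W| ≤ k + k(k-1)/2`,
let `X_V = {v : m'_v ∈ W}`, `X_E = {e ∈ E : m'_e ∈ W}`, and let `M̂` be a stable
matching in `I_W` covering `w*` containing no problematic pair. Then
`{m*, w*} ∈ M̂`; every selector woman is matched by `M̂` to some man `m_e`; the set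
`Ê = {e ∈ E : M̂(m_e) ∈ S}` has exactly `k(k-1)/2` elements; `Ê ⊆ X_E`; every
endpoint of every edge of `Ê` lies in `X_V`; and the edges of `Ê` span exactly `k`
vertices, which form a clique of size `k` in `G`. -/
theorem csm_addAg_clique_structure {V : Type*} [Fintype V] [DecidableEq V]
    (G : SimpleGraph V) (k : ℕ) (hk : 2 ≤ k)
    (I : SR (CAg V)) (hI : IsCliqueInstance G k I)
    (W : Set (CAg V)) (hW : W ⊆ addableMV ∪ addableME G)
    (hWcard : W.ncard ≤ k + k * (k - 1) / 2)
    (M : Finset (Sym2 (CAg V)))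
    (hM : (I.induce (cliqueOrig G k ∪ W)).IsStable M)
    (hcov : ∃ y, s(CAg.wstar, y) ∈ M)
    (hnoprob : ∀ p ∈ M, ¬ Problematic G p) :
    s(CAg.mstar, CAg.wstar) ∈ M ∧
    (∀ i < k * (k - 1) / 2, ∃ e ∈ G.edgeSet, s(CAg.sel i, CAg.me e) ∈ M) ∧
    ∀ XV : Set V, XV = {v : V | CAg.mv v ∈ W} →
    ∀ XE : Set (Sym2 V), XE = {e : Sym2 V | e ∈ G.edgeSet ∧ CAg.me' e ∈ W} →
    ∀ Ehat : Set (Sym2 V),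
      Ehat = {e : Sym2 V | e ∈ G.edgeSet ∧ ∃ i < k * (k - 1) / 2, s(CAg.me e, CAg.sel i) ∈ M} →
      Ehat.ncard = k * (k - 1) / 2 ∧
      Ehat ⊆ XE ∧
      (∀ e ∈ Ehat, ∀ v ∈ e, v ∈ XV) ∧
      {v : V | ∃ e ∈ Ehat, v ∈ e}.ncard = k ∧
      G.IsClique {v : V | ∃ e ∈ Ehat, v ∈ e} :=
  csm_addAg_clique_structure_general G k hk I hI W hW hWcard M hM hcov hnoprob
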